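/- arXiv:2302.08311 — 2 statements merged into one kernel-verified Lean document; each statement's English description precedes it below -/
import Mathlib

section
/- Let α ∈ (-1,∞). Suppose F: ℝ → ℂ is 2π-periodic and absolutely continuous on compact intervals with a.e. derivative Ḟ (so Ḟ ∈ L¹(T)), and let f = K_α[F] on D. Then for every r ∈ [0,1) and every θ ∈ ℝ, the angular derivative satisfies ∂_θ f(re^{iθ}) = (1/(2π))∫₀^{2π} K_α(re^{i(θ-t)}) Ḟ(t) dt. -/
open MeasureTheory Real Complex Filter Set
open scoped ENNReal Topology NNReal

noncomputable section

/-- The open unit disk in `ℂ`. -/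
def unitDisk : Set ℂ := Metric.ball 0 1

/-- The constant `C_α = Γ(1+α/2)² / Γ(1+α)`. -/
def Cconst (α : ℝ) : ℝ := Real.Gamma (1 + α / 2) ^ 2 / Real.Gamma (1 + α)

/-- The Poisson type kernel `K_α(z) = C_α (1-|z|²)^{α+1} / |1-z|^{α+2}`. -/
def Kker (α : ℝ) (z : ℂ) : ℝ :=
  Cconst α * (1 - ‖z‖ ^ 2) ^ (α + 1) / ‖1 - z‖ ^ (α + 2)

/-- The Poisson type integral `K_α[F](z) = (1/2π) ∫₀^{2π} K_α(z e^{-it}) F(t) dt`. -/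
def poissonInt (α : ℝ) (F : ℝ → ℂ) (z : ℂ) : ℂ :=
  (1 / (2 * π)) * ∫ t in (0:ℝ)..(2 * π),
    ((Kker α (z * Complex.exp (-(t : ℂ) * Complex.I)) : ℝ) : ℂ) * F t

/-- `polar r θ = r e^{iθ}`. -/
def polar (r θ : ℝ) : ℂ := (r : ℂ) * Complex.exp ((θ : ℂ) * Complex.I)

/-- The Wirtinger derivative `∂_z f = (f_x - i f_y)/2`. -/
def pderivZ (f : ℂ → ℂ) (z : ℂ) : ℂ :=
  (fderiv ℝ f z 1 - Complex.I * fderiv ℝ f z Complex.I) / 2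

/-- The Wirtinger derivative `∂_{z̄} f = (f_x + i f_y)/2`. -/
def pderivZbar (f : ℂ → ℂ) (z : ℂ) : ℂ :=
  (fderiv ℝ f z 1 + Complex.I * fderiv ℝ f z Complex.I) / 2

/-- The radial derivative `∂_r f(re^{iθ})`, as a function of the polar coordinates. -/
def radialDeriv (f : ℂ → ℂ) (r θ : ℝ) : ℂ :=
  deriv (fun s : ℝ => f (polar s θ)) r

/-- The radial derivative `∂_r f(z)`, as a function of `z`. -/
def radialDerivFun (f : ℂ → ℂ) (z : ℂ) : ℂ :=
  radialDeriv f (‖z‖) (Complex.arg z)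

/-- The angular derivative `∂_θ f(re^{iθ})`, as a function of the polar coordinates. -/
def angularDeriv (f : ℂ → ℂ) (r θ : ℝ) : ℂ :=
  deriv (fun φ : ℝ => f (polar r φ)) θ

/-- The integral mean `M_p(h) = ((1/2π)∫₀^{2π} |h(θ)|^p dθ)^{1/p}` over the circle,
with the sup for `p = ∞`. -/
def circMean (p : ℝ≥0∞) (h : ℝ → ℂ) : ℝ≥0∞ :=
  if p = ∞ then ⨆ θ : ℝ, (‖h θ‖₊ : ℝ≥0∞)
  else ((∫⁻ θ in Set.Ioc (0:ℝ) (2 * π), (‖h θ‖₊ : ℝ≥0∞) ^ p.toReal) /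
      ENNReal.ofReal (2 * π)) ^ (1 / p.toReal)

/-- The Hardy type norm `‖g‖_{H^p_G(D)} = sup_{0 ≤ r < 1} M_p(r, g)` of a function `g`
given in polar coordinates `(r, θ)`. -/
def hardyNorm (p : ℝ≥0∞) (g : ℝ → ℝ → ℂ) : ℝ≥0∞ :=
  ⨆ r ∈ Set.Ico (0:ℝ) 1, circMean p (g r)

/-- The Bergman type norm `‖g‖_{B^p_G(D)} = (∫_D |g|^p dσ)^{1/p}` with `dσ` the normalized
area measure on the unit disk; essential sup for `p = ∞`. -/
def bergmanNorm (p : ℝ≥0∞) (g : ℂ → ℂ) : ℝ≥0∞ :=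
  if p = ∞ then essSup (fun z => (‖g z‖₊ : ℝ≥0∞)) (volume.restrict unitDisk)
  else ((∫⁻ z in unitDisk, (‖g z‖₊ : ℝ≥0∞) ^ p.toReal) / ENNReal.ofReal π) ^ (1 / p.toReal)

/-- The `L^p` norm of a (`2π`-periodic) function on the circle. -/
def circleLp (p : ℝ≥0∞) (F : ℝ → ℂ) : ℝ≥0∞ :=
  if p = ∞ then essSup (fun θ => (‖F θ‖₊ : ℝ≥0∞)) volume
  else ((∫⁻ θ in Set.Ioc (0:ℝ) (2 * π), (‖F θ‖₊ : ℝ≥0∞) ^ p.toReal) /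
      ENNReal.ofReal (2 * π)) ^ (1 / p.toReal)

/-- `F` is `2π`-periodic and absolutely continuous on compact intervals with a.e. derivative
`F'`; this is encoded, equivalently, by the fundamental theorem of calculus: `F'` is locally
integrable and `F` is the indefinite integral of `F'`. -/
def PeriodicAC (F F' : ℝ → ℂ) : Prop :=
  Function.Periodic F (2 * π) ∧
  (∀ a b : ℝ, IntervalIntegrable F' volume a b) ∧
  (∀ θ : ℝ, F θ = F 0 + ∫ t in (0:ℝ)..θ, F' t)

/-- `F` belongs to `L^p` of the circle. -/
def MemLpT (p : ℝ≥0∞) (F : ℝ → ℂ) : Prop :=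
  AEStronglyMeasurable F volume ∧ circleLp p F < ∞

/-- `‖D_f(z)‖ = |∂_z f(z)| + |∂_{z̄} f(z)|`. -/
def Dnorm (f : ℂ → ℂ) (z : ℂ) : ℝ :=
  ‖pderivZ f z‖ + ‖pderivZbar f z‖

/-- The Jacobian `J_f(z) = |∂_z f(z)|² - |∂_{z̄} f(z)|²`. -/
def jacobian (f : ℂ → ℂ) (z : ℂ) : ℝ :=
  ‖pderivZ f z‖ ^ 2 - ‖pderivZbar f z‖ ^ 2

/-- `f` is a (sense-preserving) `(K,K')`-elliptic mapping of the unit disk. -/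
def IsElliptic (K K' : ℝ) (f : ℂ → ℂ) : Prop :=
  ContinuousOn f unitDisk ∧
  (∀ᵐ z ∂(volume.restrict unitDisk), 0 < jacobian f z) ∧
  (∀ᵐ z ∂(volume.restrict unitDisk), Dnorm f z ^ 2 ≤ K * jacobian f z + K')

/-!
Write `k(s) = K_α(r e^{is})`; for `0 ≤ r < 1` it is continuous and `2π`-periodic, and
`K_α[F](r e^{iφ}) = (1/2π) ∫₀^{2π} k(φ - t) F(t) dt`. Substituting `F(t) = F(0) + ∫₀^t Ḟ` and
exchanging the order of integration gives `F(0) ∫₀^{2π} k + ∫₀^{2π} Ḟ(u) L(φ - u) du` with `L` a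
primitive of `k`; the boundary term `L(φ - 2π) ∫₀^{2π} Ḟ` vanishes since `F` is periodic. As
`L' = k` is bounded, this can be differentiated under the integral sign.
-/

theorem intervalIntegral.integral_mul_primitive_eq {𝕜 : Type*} [RCLike 𝕜] {f g : ℝ → 𝕜}
    {a b : ℝ} (hab : a ≤ b) (hf : IntervalIntegrable f volume a b)
    (hg : IntervalIntegrable g volume a b) :
    ∫ t in a..b, f t * ∫ u in a..t, g u = ∫ u in a..b, g u * ∫ t in u..b, f t := by
  set μ := volume.restrict (Ioc a b)
  set T := {p : ℝ × ℝ | p.2 ≤ p.1}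
  set h := T.indicator fun p : ℝ × ℝ => f p.1 * g p.2
  have hT : MeasurableSet T := measurableSet_le measurable_snd measurable_fst
  have hh : Integrable (Function.uncurry fun t u => h (t, u)) (μ.prod μ) :=
    (hf.1.mul_prod hg.1).indicator hT
  have h_left : ∀ t ∈ Ioc a b, f t * ∫ u in a..t, g u = ∫ u, h (t, u) ∂μ := by
    intro t ht
    have h_slice : (fun u => h (t, u)) = (Iic t).indicator fun u => f t * g u := by
      ext u; simp [h, T, Set.indicator_apply]
    rw [h_slice, MeasureTheory.integral_indicator measurableSet_Iic,
      Measure.restrict_restrict measurableSet_Iic, Iic_inter_Ioc_of_le ht.2,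
      MeasureTheory.integral_const_mul, intervalIntegral.integral_of_le ht.1.le]
  have h_right : ∀ u ∈ Ioc a b, g u * ∫ t in u..b, f t = ∫ t, h (t, u) ∂μ := by
    intro u hu
    have h_slice : (fun t => h (t, u)) = (Ici u).indicator fun t => f t * g u := by
      ext t; simp [h, T, Set.indicator_apply]
    have hset : Ici u ∩ Ioc a b = Icc u b := by
      ext t; simp only [mem_inter_iff, mem_Ici, mem_Ioc, mem_Icc]
      constructor
      · rintro ⟨hut, -, htb⟩; exact ⟨hut, htb⟩
      · rintro ⟨hut, htb⟩; exact ⟨hut, hu.1.trans_le hut, htb⟩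
    rw [h_slice, MeasureTheory.integral_indicator measurableSet_Ici,
      Measure.restrict_restrict measurableSet_Ici, hset, integral_Icc_eq_integral_Ioc,
      MeasureTheory.integral_mul_const,
      intervalIntegral.integral_of_le hu.2, mul_comm]
  rw [intervalIntegral.integral_of_le hab, intervalIntegral.integral_of_le hab,
    setIntegral_congr_fun measurableSet_Ioc h_left,
    setIntegral_congr_fun measurableSet_Ioc h_right]
  exact integral_integral_swap hh

theorem intervalIntegral.hasDerivAt_integral_mul_comp_sub {𝕜 : Type*} [RCLike 𝕜]
    {g L k : ℝ → 𝕜} {a b M : ℝ} (hg : IntervalIntegrable g volume a b)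
    (hL : ∀ x, HasDerivAt L (k x) x) (hk : Continuous k) (hkM : ∀ x, ‖k x‖ ≤ M) (θ : ℝ) :
    HasDerivAt (fun φ => ∫ u in a..b, g u * L (φ - u)) (∫ u in a..b, g u * k (θ - u)) θ := by
  have hLc : Continuous L := continuous_iff_continuousAt.2 fun x => (hL x).continuousAt
  have hg_meas : AEStronglyMeasurable g (volume.restrict (Set.uIoc a b)) :=
    (intervalIntegrable_iff.1 hg).aestronglyMeasurable
  refine (hasDerivAt_integral_of_dominated_loc_of_deriv_le (F := fun φ u => g u * L (φ - u))
    (F' := fun φ u => g u * k (φ - u)) (bound := fun u => ‖g u‖ * M)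
    univ_mem ?_ ?_ ?_ ?_ (hg.norm.mul_const M) ?_).2
  · exact .of_forall fun φ =>
      hg_meas.mul (hLc.comp (continuous_const.sub continuous_id)).aestronglyMeasurable
  · exact hg.mul_continuousOn (hLc.comp (continuous_const.sub continuous_id)).continuousOn
  · exact hg_meas.mul (hk.comp (continuous_const.sub continuous_id)).aestronglyMeasurable
  · refine .of_forall fun u _ φ _ => ?_
    rw [norm_mul]
    exact mul_le_mul_of_nonneg_left (hkM _) (norm_nonneg _)
  · exact .of_forall fun u _ φ _ => ((hL (φ - u)).comp_sub_const φ u).const_mul (g u)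

theorem PeriodicAC.integral_deriv_eq_zero {F F' : ℝ → ℂ} (hF : PeriodicAC F F') :
    ∫ t in (0:ℝ)..(2 * π), F' t = 0 := by
  have h := hF.2.2 (2 * π)
  have h_per := hF.1 0
  rw [zero_add] at h_per
  rwa [h_per, left_eq_add] at h

theorem PeriodicAC.integral_comp_sub_mul_eq {F F' k : ℝ → ℂ} (hF : PeriodicAC F F')
    (hk : Continuous k) (hkper : Function.Periodic k (2 * π)) (φ : ℝ) :
    ∫ t in (0:ℝ)..(2 * π), k (φ - t) * F t
      = F 0 * (∫ s in (0:ℝ)..(2 * π), k s)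
        + ∫ u in (0:ℝ)..(2 * π), F' u * ∫ s in (0:ℝ)..(φ - u), k s := by
  have hF'_int := hF.2.1 0 (2 * π)
  set L : ℝ → ℂ := fun x => ∫ s in (0:ℝ)..x, k s
  have hk_sub : Continuous fun t => k (φ - t) := hk.comp (continuous_const.sub continuous_id)
  have hk_shift : ∫ t in (0:ℝ)..(2 * π), k (φ - t) = ∫ s in (0:ℝ)..(2 * π), k s := by
    rw [intervalIntegral.integral_comp_sub_left, sub_zero]
    simpa only [sub_add_cancel, zero_add] using hkper.intervalIntegral_add_eq (φ - 2 * π) 0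
  have hk_tail : ∀ u, ∫ t in u..(2 * π), k (φ - t) = L (φ - u) - L (φ - 2 * π) := fun u => by
    rw [intervalIntegral.integral_comp_sub_left,
      intervalIntegral.integral_interval_sub_left (hk.intervalIntegrable _ _)
        (hk.intervalIntegrable _ _)]
  have hLc : Continuous L := intervalIntegral.continuous_primitive hk.intervalIntegrable 0
  have hkA_int :
      IntervalIntegrable (fun t => k (φ - t) * ∫ u in (0:ℝ)..t, F' u) volume 0 (2 * π) :=
    (hk_sub.mul (intervalIntegral.continuous_primitive hF.2.1 0)).intervalIntegrable _ _
  have hF'L_int : IntervalIntegrable (fun u => F' u * L (φ - u)) volume 0 (2 * π) :=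
    hF'_int.mul_continuousOn (hLc.comp (continuous_const.sub continuous_id)).continuousOn
  calc ∫ t in (0:ℝ)..(2 * π), k (φ - t) * F t
      = ∫ t in (0:ℝ)..(2 * π), (k (φ - t) * F 0 + k (φ - t) * ∫ u in (0:ℝ)..t, F' u) :=
        intervalIntegral.integral_congr fun t _ => by rw [hF.2.2 t, mul_add]
    _ = (∫ t in (0:ℝ)..(2 * π), k (φ - t)) * F 0
          + ∫ t in (0:ℝ)..(2 * π), k (φ - t) * ∫ u in (0:ℝ)..t, F' u := by
        rw [intervalIntegral.integral_add ((hk_sub.intervalIntegrable _ _).mul_const _) hkA_int,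
          intervalIntegral.integral_mul_const]
    _ = F 0 * (∫ s in (0:ℝ)..(2 * π), k s)
          + ∫ u in (0:ℝ)..(2 * π), F' u * (L (φ - u) - L (φ - 2 * π)) := by
        rw [hk_shift, mul_comm, intervalIntegral.integral_mul_primitive_eq two_pi_pos.le
          (hk_sub.intervalIntegrable _ _) hF'_int]
        simp only [hk_tail]
    _ = F 0 * (∫ s in (0:ℝ)..(2 * π), k s) + ∫ u in (0:ℝ)..(2 * π), F' u * L (φ - u) := by
        simp only [mul_sub]
        rw [intervalIntegral.integral_sub hF'L_int (hF'_int.mul_const _),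
          intervalIntegral.integral_mul_const, hF.integral_deriv_eq_zero, zero_mul, sub_zero]

theorem PeriodicAC.hasDerivAt_integral_comp_sub_mul {F F' k : ℝ → ℂ} (hF : PeriodicAC F F')
    (hk : Continuous k) (hkper : Function.Periodic k (2 * π)) (θ : ℝ) :
    HasDerivAt (fun φ => ∫ t in (0:ℝ)..(2 * π), k (φ - t) * F t)
      (∫ t in (0:ℝ)..(2 * π), k (θ - t) * F' t) θ := by
  obtain ⟨M, hM⟩ := (hkper.isBounded_of_continuous two_pi_pos.ne' hk).exists_norm_le
  have hL : ∀ x, HasDerivAt (fun x => ∫ s in (0:ℝ)..x, k s) (k x) x := fun x =>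
    hk.integral_hasStrictDerivAt 0 x |>.hasDerivAt
  have h := (intervalIntegral.hasDerivAt_integral_mul_comp_sub (hF.2.1 0 (2 * π)) hL hk
    (fun x => hM _ ⟨x, rfl⟩) θ).const_add (F 0 * ∫ s in (0:ℝ)..(2 * π), k s)
  rw [funext (hF.integral_comp_sub_mul_eq hk hkper)]
  simpa only [mul_comm (F' _)] using h

theorem norm_polar (r s : ℝ) : ‖polar r s‖ = |r| := by
  rw [polar, norm_mul, Complex.norm_real, Complex.norm_exp_ofReal_mul_I, mul_one, Real.norm_eq_abs]

theorem polar_periodic (r : ℝ) : Function.Periodic (polar r) (2 * π) := fun s => by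
  rw [polar, polar, ofReal_add, add_mul, Complex.exp_add, ofReal_mul, ofReal_ofNat,
    Complex.exp_two_pi_mul_I, mul_one]

theorem polar_mul_exp_neg (r φ t : ℝ) :
    polar r φ * Complex.exp (-(t : ℂ) * Complex.I) = polar r (φ - t) := by
  rw [polar, polar, mul_assoc, ← Complex.exp_add, ofReal_sub, sub_mul, sub_eq_add_neg, neg_mul]

theorem continuous_polar (r : ℝ) : Continuous (polar r) := by
  unfold polar; fun_prop

theorem continuousOn_Kker (α : ℝ) : ContinuousOn (Kker α) unitDisk := by
  intro z hz
  have hz1 : ‖z‖ < 1 := mem_ball_zero_iff.1 hz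
  have h_num : 0 < 1 - ‖z‖ ^ 2 := by nlinarith [norm_nonneg z]
  have h_den : 0 < ‖1 - z‖ := norm_pos_iff.2 (sub_ne_zero.2 fun h => by simp [← h] at hz1)
  unfold Kker
  refine ContinuousAt.continuousWithinAt ?_
  refine ContinuousAt.div (continuousAt_const.mul ?_) ?_ (Real.rpow_pos_of_pos h_den _).ne'
  · exact (continuousAt_const.sub (continuous_norm.pow 2).continuousAt).rpow_const (.inl h_num.ne')
  · exact (continuous_const.sub continuous_id).norm.continuousAt.rpow_const (.inl h_den.ne')

theorem continuous_Kker_polar (α : ℝ) {r : ℝ} (hr : |r| < 1) :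
    Continuous fun s => Kker α (polar r s) :=
  (continuousOn_Kker α).comp_continuous (continuous_polar r) fun s => by
    rwa [unitDisk, mem_ball_zero_iff, norm_polar]

theorem stmt1_general (α : ℝ) (F F' : ℝ → ℂ) (hF : PeriodicAC F F')
    (r : ℝ) (hr0 : 0 ≤ r) (hr1 : r < 1) (θ : ℝ) :
    HasDerivAt (fun φ : ℝ => poissonInt α F (polar r φ))
      ((1 / (2 * π)) * ∫ t in (0:ℝ)..(2 * π), ((Kker α (polar r (θ - t)) : ℝ) : ℂ) * F' t)
      θ := by
  have hk : Continuous fun s => ((Kker α (polar r s) : ℝ) : ℂ) :=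
    continuous_ofReal.comp (continuous_Kker_polar α (abs_lt.2 ⟨by linarith, hr1⟩))
  have hkper : Function.Periodic (fun s => ((Kker α (polar r s) : ℝ) : ℂ)) (2 * π) := fun s => by
    simp only [polar_periodic r s]
  simp only [poissonInt, polar_mul_exp_neg]
  exact (hF.hasDerivAt_integral_comp_sub_mul hk hkper θ).const_mul _

/-- For `α ∈ (-1,∞)` and a `2π`-periodic absolutely continuous `F` with a.e.
derivative `F'`, the Poisson type integral `f = K_α[F]` satisfies, for every `0 ≤ r < 1` and
every `θ`, `∂_θ f(re^{iθ}) = (1/2π) ∫₀^{2π} K_α(re^{i(θ-t)}) Ḟ(t) dt`. -/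
theorem stmt1 (α : ℝ) (hα : -1 < α) (F F' : ℝ → ℂ) (hF : PeriodicAC F F')
    (r : ℝ) (hr0 : 0 ≤ r) (hr1 : r < 1) (θ : ℝ) :
    HasDerivAt (fun φ : ℝ => poissonInt α F (polar r φ))
      ((1 / (2 * π)) * ∫ t in (0:ℝ)..(2 * π), ((Kker α (polar r (θ - t)) : ℝ) : ℂ) * F' t)
      θ :=
  stmt1_general α F F' hF r hr0 hr1 θ

end
end

section
/- Let α ∈ (-1,0), let n be a positive integer, and let f(z) = Σ_{k=0}^∞ a_{n,k} |z|^{2k} z^n on D, where a_{n,k} = ((-α/2)_k (n-α/2)_k)/((n+1)_k · k!) and (x)_k = x(x+1)⋯(x+k-1) is the rising factorial. Then for every K ≥ 1, the quantity ‖D_f(z)‖² - K·J_f(z) tends to +∞ as |z| → 1⁻; in particular, for every K ≥ 1 and K' ≥ 0 there exists z ∈ D with ‖D_f(z)‖² > K·J_f(z) + K', so f is not a (K,K')-elliptic mapping for any K ≥ 1 and K' ≥ 0. -/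
open MeasureTheory Real Complex Filter Set
open scoped ENNReal Topology NNReal

noncomputable section

/-- The rising factorial `(x)_k = x(x+1)⋯(x+k-1)`. -/
noncomputable def poch (x : ℝ) (k : ℕ) : ℝ := Polynomial.eval x (ascPochhammer ℝ k)

/-- `a_{n,k} = ((-α/2)_k (n-α/2)_k)/((n+1)_k k!)`. -/
noncomputable def coefA (α : ℝ) (n k : ℕ) : ℝ :=
  poch (-α / 2) k * poch ((n : ℝ) - α / 2) k / (poch ((n : ℝ) + 1) k * (Nat.factorial k))

/-- The mapping `f(z) = Σ_{k≥0} a_{n,k} |z|^{2k} z^n`. -/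
noncomputable def exF (α : ℝ) (n : ℕ) (z : ℂ) : ℂ :=
  ∑' k : ℕ, ((coefA α n k * ‖z‖ ^ (2 * k) : ℝ) : ℂ) * z ^ n


/-! The map is `f(z) = F(|z|²) zⁿ` with `F = ₂F₁(a, b; c; ·)`, `a = -α/2`, `b = n - α/2`,
`c = n + 1`, so `∂f = (n F + |z|² F') zⁿ⁻¹` and `∂̄f = F' zⁿ⁺¹`. The Taylor coefficients of `F` are
positive, and since `c - a - b = 1 + α ∈ (0, 1)`, Raabe-type comparisons show that `Σ a_{n,k}`
converges while `Σ k a_{n,k}` diverges. Hence, with `p = |∂f|` and `q = |∂̄f|`, the difference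
`p - q = n F(|z|²) |z|ⁿ⁻¹` stays bounded while `q → ∞` as `|z| → 1⁻`, so that
`‖D_f‖² - K J_f = (p + q)(p + q - K (p - q)) ≥ q` near the circle. The ellipticity inequality
therefore fails on a whole annulus `l < |z| < 1`, which is not a null set. -/

open ComplexConjugate

section Wirtinger

variable {f g : ℂ → ℂ} {z : ℂ}

lemma pderivZ_mul (hf : DifferentiableAt ℝ f z) (hg : DifferentiableAt ℝ g z) :
    pderivZ (fun w => f w * g w) z = f z * pderivZ g z + g z * pderivZ f z := by
  simp only [pderivZ, fderiv_fun_mul hf hg, add_apply, smul_apply, smul_eq_mul]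
  ring

lemma pderivZbar_mul (hf : DifferentiableAt ℝ f z) (hg : DifferentiableAt ℝ g z) :
    pderivZbar (fun w => f w * g w) z = f z * pderivZbar g z + g z * pderivZbar f z := by
  simp only [pderivZbar, fderiv_fun_mul hf hg, add_apply, smul_apply, smul_eq_mul]
  ring

lemma fderiv_apply_of_hasDerivAt {f' : ℂ} (hf : HasDerivAt f f' z) (v : ℂ) :
    fderiv ℝ f z v = v * f' := by
  rw [(hf.hasFDerivAt.restrictScalars ℝ).fderiv]
  simp

lemma pderivZ_of_hasDerivAt {f' : ℂ} (hf : HasDerivAt f f' z) : pderivZ f z = f' := by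
  simp only [pderivZ, fderiv_apply_of_hasDerivAt hf]
  linear_combination (-f' / 2) * I_sq

lemma pderivZbar_of_hasDerivAt {f' : ℂ} (hf : HasDerivAt f f' z) : pderivZbar f z = 0 := by
  simp only [pderivZbar, fderiv_apply_of_hasDerivAt hf]
  linear_combination (f' / 2) * I_sq

variable {φ : ℝ → ℝ} {φ' : ℝ}

lemma hasFDerivAt_ofReal_comp_norm_sq (hφ : HasDerivAt φ φ' (‖z‖ ^ 2)) :
    HasFDerivAt (fun w : ℂ => (φ (‖w‖ ^ 2) : ℂ))
      (ofRealCLM.comp (φ' • (2 • innerSL ℝ z))) z :=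
  ofRealCLM.hasFDerivAt.comp z
    (hφ.comp_hasFDerivAt z (hasStrictFDerivAt_norm_sq z).hasFDerivAt)

lemma fderiv_ofReal_comp_norm_sq_apply (hφ : HasDerivAt φ φ' (‖z‖ ^ 2)) (v : ℂ) :
    fderiv ℝ (fun w : ℂ => (φ (‖w‖ ^ 2) : ℂ)) z v = (2 * φ' * (z.re * v.re + z.im * v.im) : ℝ) := by
  simp only [(hasFDerivAt_ofReal_comp_norm_sq hφ).fderiv, ContinuousLinearMap.comp_apply,
    ofRealCLM_apply, smul_apply, coe_innerSL_apply, Complex.inner, mul_re, conj_re, conj_im,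
    smul_eq_mul, nsmul_eq_mul]
  push_cast
  ring

lemma pderivZ_ofReal_comp_norm_sq (hφ : HasDerivAt φ φ' (‖z‖ ^ 2)) :
    pderivZ (fun w : ℂ => (φ (‖w‖ ^ 2) : ℂ)) z = φ' * conj z := by
  have hconj : conj z = z.re - z.im * I := by apply Complex.ext <;> simp
  rw [pderivZ, fderiv_ofReal_comp_norm_sq_apply hφ, fderiv_ofReal_comp_norm_sq_apply hφ, hconj]
  simp only [one_re, one_im, I_re, I_im]
  push_cast
  ring

lemma pderivZbar_ofReal_comp_norm_sq (hφ : HasDerivAt φ φ' (‖z‖ ^ 2)) :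
    pderivZbar (fun w : ℂ => (φ (‖w‖ ^ 2) : ℂ)) z = φ' * z := by
  conv_rhs => rw [← re_add_im z]
  rw [pderivZbar, fderiv_ofReal_comp_norm_sq_apply hφ, fderiv_ofReal_comp_norm_sq_apply hφ]
  simp only [one_re, one_im, I_re, I_im]
  push_cast
  ring

end Wirtinger

section RadialTimesPower

variable {φ : ℝ → ℝ} {φ' : ℝ} {z : ℂ}

lemma differentiableAt_ofReal_comp_norm_sq (hφ : HasDerivAt φ φ' (‖z‖ ^ 2)) :
    DifferentiableAt ℝ (fun w : ℂ => (φ (‖w‖ ^ 2) : ℂ)) z :=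
  (hasFDerivAt_ofReal_comp_norm_sq hφ).differentiableAt

lemma pderivZ_ofReal_comp_norm_sq_mul_pow (hφ : HasDerivAt φ φ' (‖z‖ ^ 2)) (n : ℕ) :
    pderivZ (fun w : ℂ => (φ (‖w‖ ^ 2) : ℂ) * w ^ n) z =
      φ (‖z‖ ^ 2) * (n * z ^ (n - 1)) + z ^ n * (φ' * conj z) := by
  rw [pderivZ_mul (differentiableAt_ofReal_comp_norm_sq hφ)
    ((differentiableAt_pow (𝕜 := ℂ) n).restrictScalars ℝ),
    pderivZ_of_hasDerivAt (hasDerivAt_pow n z),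
    pderivZ_ofReal_comp_norm_sq hφ]

lemma pderivZbar_ofReal_comp_norm_sq_mul_pow (hφ : HasDerivAt φ φ' (‖z‖ ^ 2)) (n : ℕ) :
    pderivZbar (fun w : ℂ => (φ (‖w‖ ^ 2) : ℂ) * w ^ n) z = φ' * z ^ (n + 1) := by
  rw [pderivZbar_mul (differentiableAt_ofReal_comp_norm_sq hφ)
    ((differentiableAt_pow (𝕜 := ℂ) n).restrictScalars ℝ),
    pderivZbar_of_hasDerivAt (hasDerivAt_pow n z),
    pderivZbar_ofReal_comp_norm_sq hφ]
  ring

lemma norm_pderivZbar_ofReal_comp_norm_sq_mul_pow (hφ : HasDerivAt φ φ' (‖z‖ ^ 2))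
    (hφ' : 0 ≤ φ') (n : ℕ) :
    ‖pderivZbar (fun w : ℂ => (φ (‖w‖ ^ 2) : ℂ) * w ^ n) z‖ = φ' * ‖z‖ ^ (n + 1) := by
  rw [pderivZbar_ofReal_comp_norm_sq_mul_pow hφ, norm_mul, norm_real, norm_pow,
    Real.norm_of_nonneg hφ']

lemma norm_pderivZ_ofReal_comp_norm_sq_mul_pow (hφ : HasDerivAt φ φ' (‖z‖ ^ 2))
    (hφ0 : 0 ≤ φ (‖z‖ ^ 2)) (hφ' : 0 ≤ φ') (n : ℕ) :
    ‖pderivZ (fun w : ℂ => (φ (‖w‖ ^ 2) : ℂ) * w ^ n) z‖ =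
      ‖pderivZbar (fun w : ℂ => (φ (‖w‖ ^ 2) : ℂ) * w ^ n) z‖ +
        n * φ (‖z‖ ^ 2) * ‖z‖ ^ (n - 1) := by
  rw [norm_pderivZbar_ofReal_comp_norm_sq_mul_pow hφ hφ', pderivZ_ofReal_comp_norm_sq_mul_pow hφ]
  cases n with
  | zero => simp [Real.norm_of_nonneg hφ']
  | succ m =>
    have h : φ (‖z‖ ^ 2) * ((m + 1 : ℕ) * z ^ m) + z ^ (m + 1) * (φ' * conj z) =
        (((m + 1) * φ (‖z‖ ^ 2) + φ' * ‖z‖ ^ 2 : ℝ) : ℂ) * z ^ m := by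
      push_cast
      rw [← conj_mul']
      ring
    rw [Nat.add_sub_cancel, h, norm_mul, norm_real, norm_pow, Real.norm_of_nonneg (by positivity)]
    push_cast
    ring

end RadialTimesPower

section PowerSeries

variable {A : ℕ → ℝ} {C s : ℝ}

lemma summable_natCast_mul_pow_sub_one {r : ℝ} (hr : ‖r‖ < 1) :
    Summable fun k : ℕ => (k : ℝ) * r ^ (k - 1) := by
  refine (summable_nat_add_iff 1).mp ?_
  refine ((summable_pow_mul_geometric_of_norm_lt_one 1 hr).add
    (summable_geometric_of_norm_lt_one hr)).congr fun k => ?_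
  simp only [Nat.add_sub_cancel]
  push_cast
  ring

lemma summable_natCast_mul_mul_pow_sub_one (hA : ∀ k, ‖A k‖ ≤ C) (hs : ‖s‖ < 1) :
    Summable fun k : ℕ => k * A k * s ^ (k - 1) := by
  have hs' : ‖‖s‖‖ < 1 := by rwa [norm_norm]
  refine Summable.of_norm_bounded ((summable_natCast_mul_pow_sub_one hs').mul_left C) fun k => ?_
  rw [norm_mul, norm_mul, norm_pow, RCLike.norm_natCast]
  calc (k : ℝ) * ‖A k‖ * ‖s‖ ^ (k - 1) ≤ k * C * ‖s‖ ^ (k - 1) := by gcongr; exact hA k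
    _ = C * (k * ‖s‖ ^ (k - 1)) := by ring

lemma hasDerivAt_tsum_mul_pow (hA : ∀ k, ‖A k‖ ≤ C) (hs : ‖s‖ < 1) :
    HasDerivAt (fun s => ∑' k, A k * s ^ k) (∑' k : ℕ, k * A k * s ^ (k - 1)) s := by
  obtain ⟨r, hsr, hr1⟩ := exists_between hs
  have hr0 : 0 < r := (norm_nonneg s).trans_lt hsr
  have hr : ‖r‖ < 1 := by rwa [Real.norm_of_nonneg hr0.le]
  refine hasDerivAt_tsum_of_isPreconnected (g' := fun k y => k * A k * y ^ (k - 1))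
    ((summable_natCast_mul_pow_sub_one hr).mul_left C)
    Metric.isOpen_ball (convex_ball 0 r).isPreconnected
    (fun k y _ => ((hasDerivAt_pow k y).const_mul (A k)).congr_deriv (by ring))
    (fun k y hy => ?_) (Metric.mem_ball_self hr0 : (0 : ℝ) ∈ Metric.ball 0 r)
    ((summable_nat_add_iff 1).mp (by simp)) (mem_ball_zero_iff.mpr hsr)
  rw [mem_ball_zero_iff] at hy
  have hC : 0 ≤ C := (norm_nonneg _).trans (hA 0)
  rw [norm_mul, norm_mul, norm_pow, RCLike.norm_natCast]
  calc (k : ℝ) * ‖A k‖ * ‖y‖ ^ (k - 1) ≤ k * C * r ^ (k - 1) := by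
        gcongr
        exact hA k
    _ = C * (k * r ^ (k - 1)) := by ring

lemma tsum_mul_pow_le_tsum (hA0 : ∀ k, 0 ≤ A k) (hA : Summable A) (hs0 : 0 ≤ s) (hs1 : s ≤ 1) :
    ∑' k, A k * s ^ k ≤ ∑' k, A k := by
  have hle : ∀ k, A k * s ^ k ≤ A k := fun k => mul_le_of_le_one_right (hA0 k) (pow_le_one₀ hs0 hs1)
  exact (hA.of_nonneg_of_le (fun k => mul_nonneg (hA0 k) (pow_nonneg hs0 k)) hle).tsum_le_tsum
    hle hA

lemma tendsto_tsum_natCast_mul_mul_pow_sub_one (hA0 : ∀ k, 0 ≤ A k) (hA : ∀ k, ‖A k‖ ≤ C)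
    (hdiv : ¬ Summable fun k : ℕ => k * A k) :
    Tendsto (fun s => ∑' k : ℕ, k * A k * s ^ (k - 1)) (𝓝[<] 1) atTop := by
  have hpartial : Tendsto (fun N => ∑ k ∈ Finset.range N, k * A k) atTop atTop :=
    (not_summable_iff_tendsto_nat_atTop_of_nonneg fun k => mul_nonneg k.cast_nonneg (hA0 k)).mp hdiv
  refine tendsto_atTop.mpr fun M => ?_
  obtain ⟨N, hN⟩ := (hpartial.eventually_gt_atTop M).exists
  have hcont : Continuous fun s : ℝ => ∑ k ∈ Finset.range N, k * A k * s ^ (k - 1) := by fun_prop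
  have hnear : ∀ᶠ s in 𝓝[<] 1, M < ∑ k ∈ Finset.range N, k * A k * s ^ (k - 1) :=
    nhdsWithin_le_nhds <| (hcont.tendsto 1).eventually_const_lt (by simpa using hN)
  filter_upwards [hnear, Ioo_mem_nhdsLT (show (0 : ℝ) < 1 by norm_num)] with s hs hs01
  have hs1 : ‖s‖ < 1 := by rw [Real.norm_of_nonneg hs01.1.le]; exact hs01.2
  exact hs.le.trans <| (summable_natCast_mul_mul_pow_sub_one hA hs1).sum_le_tsum _
    fun k _ => mul_nonneg (mul_nonneg k.cast_nonneg (hA0 k)) (pow_nonneg hs01.1.le _)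

end PowerSeries

section RaabeTest

variable {u : ℕ → ℝ}

lemma summable_of_eventually_succ_mul_add_le {ε : ℝ} (hε : 0 < ε) (hu : ∀ k, 0 ≤ u k)
    (h : ∀ᶠ k : ℕ in atTop, (k + 1) * u (k + 1) + ε * u k ≤ k * u k) : Summable u := by
  obtain ⟨N, hN⟩ := eventually_atTop.mp h
  have htelescope : ∀ m : ℕ,
      ε * ∑ i ∈ Finset.range m, u (i + N) + (N + m) * u (N + m) ≤ N * u N := by
    intro m
    induction m with
    | zero => simp
    | succ m ih =>
      have hstep := hN (N + m) (Nat.le_add_right N m)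
      rw [Finset.sum_range_succ, add_comm m N, ← add_assoc]
      push_cast at hstep ⊢
      linarith
  refine (summable_nat_add_iff N).mp
    (summable_of_sum_range_le (c := N * u N / ε) (fun i => hu _) fun m => ?_)
  rw [le_div_iff₀' hε]
  have := mul_nonneg (by positivity : (0 : ℝ) ≤ N + m) (hu (N + m))
  linarith [htelescope m]

lemma not_summable_of_mul_le_succ_mul (h : ∀ k : ℕ, k * u k ≤ (k + 1) * u (k + 1))
    (h1 : 0 < u 1) : ¬ Summable u := by
  have hlower : ∀ k : ℕ, u 1 ≤ (k + 1) * u (k + 1) := by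
    intro k
    induction k with
    | zero => simp
    | succ k ih =>
      have := h (k + 1)
      push_cast at this ⊢
      linarith
  intro hu
  refine Real.not_summable_one_div_natCast ((summable_nat_add_iff 1).mp ?_)
  refine (((summable_nat_add_iff 1).mpr hu).mul_left (u 1)⁻¹).of_nonneg_of_le
    (fun k => by positivity) fun k => ?_
  rw [Nat.cast_add_one, div_le_iff₀ (by positivity), mul_assoc, mul_comm (u _),
    le_inv_mul_iff₀ h1, mul_one]
  exact hlower k

end RaabeTest

section HypergeometricCoefficient

variable {a b c : ℝ}

lemma ordinaryHypergeometricCoefficient_pos (ha : 0 < a) (hb : 0 < b) (hc : 0 < c) (k : ℕ) :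
    0 < ordinaryHypergeometricCoefficient a b c k := by
  have := ascPochhammer_pos k a ha
  have := ascPochhammer_pos k b hb
  have := ascPochhammer_pos k c hc
  positivity

lemma ordinaryHypergeometricCoefficient_succ (hc : 0 < c) (k : ℕ) :
    ordinaryHypergeometricCoefficient a b c (k + 1) * ((c + k) * (k + 1)) =
      ordinaryHypergeometricCoefficient a b c k * ((a + k) * (b + k)) := by
  have := ascPochhammer_pos k c hc
  have : 0 < c + k := by positivity
  simp only [ordinaryHypergeometricCoefficient, ascPochhammer_succ_eval, Nat.factorial_succ]
  push_cast
  field_simp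

lemma summable_ordinaryHypergeometricCoefficient (ha : 0 < a) (hb : 0 < b) (hc : 0 < c)
    (habc : a + b < c) : Summable (ordinaryHypergeometricCoefficient a b c) := by
  obtain ⟨ε, hε, rfl⟩ : ∃ ε, 0 < ε ∧ c = a + b + 2 * ε := ⟨(c - a - b) / 2, by linarith, by ring⟩
  refine summable_of_eventually_succ_mul_add_le hε
    (fun k => (ordinaryHypergeometricCoefficient_pos ha hb hc k).le) ?_
  filter_upwards [tendsto_natCast_atTop_atTop.eventually_ge_atTop
    ((a * b + ε * (a + b + 2 * ε)) / ε)] with k hk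
  rw [div_le_iff₀ hε] at hk
  have hu := ordinaryHypergeometricCoefficient_pos ha hb hc k
  have hrec := ordinaryHypergeometricCoefficient_succ (a := a) (b := b) hc k
  have hbracket : (a + k) * (b + k) + ε * (a + b + 2 * ε + k) ≤ k * (a + b + 2 * ε + k) := by
    linear_combination hk
  refine le_of_mul_le_mul_right ?_ (hc.trans_le (le_add_of_nonneg_right k.cast_nonneg))
  nlinarith [mul_le_mul_of_nonneg_left hbracket hu.le]

lemma not_summable_natCast_mul_ordinaryHypergeometricCoefficient (ha : 0 < a) (hb : 0 < b)
    (hc : 0 < c) (habc : c ≤ a + b + 1) :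
    ¬ Summable fun k : ℕ => k * ordinaryHypergeometricCoefficient a b c k := by
  refine not_summable_of_mul_le_succ_mul (fun k => ?_) (by
    simpa using ordinaryHypergeometricCoefficient_pos ha hb hc 1)
  have hu := ordinaryHypergeometricCoefficient_pos ha hb hc k
  have hrec := ordinaryHypergeometricCoefficient_succ (a := a) (b := b) hc k
  have hk : (0 : ℝ) ≤ k := k.cast_nonneg
  have hpoly : (k : ℝ) ^ 2 * (c + k) ≤ (k + 1) * ((a + k) * (b + k)) := by
    nlinarith [mul_nonneg (mul_nonneg ha.le hb.le) hk]
  have hck : 0 < c + k := by positivity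
  push_cast
  refine le_of_mul_le_mul_right ?_ hck
  nlinarith [mul_le_mul_of_nonneg_left hpoly hu.le]

end HypergeometricCoefficient

section HypergeometricFunction

variable {a b c s : ℝ}

lemma ordinaryHypergeometric_eq_tsum_mul_pow (a b c : ℝ) :
    ₂F₁ a b c = fun s : ℝ => ∑' k, ordinaryHypergeometricCoefficient a b c k * s ^ k := by
  rw [ordinaryHypergeometric_eq_tsum]
  rfl

lemma norm_ordinaryHypergeometricCoefficient_le_tsum (ha : 0 < a) (hb : 0 < b) (hc : 0 < c)
    (habc : a + b < c) (k : ℕ) :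
    ‖ordinaryHypergeometricCoefficient a b c k‖ ≤
      ∑' j, ordinaryHypergeometricCoefficient a b c j := by
  rw [Real.norm_of_nonneg (ordinaryHypergeometricCoefficient_pos ha hb hc k).le]
  exact (summable_ordinaryHypergeometricCoefficient ha hb hc habc).le_tsum k
    fun j _ => (ordinaryHypergeometricCoefficient_pos ha hb hc j).le

lemma hasDerivAt_ordinaryHypergeometric (ha : 0 < a) (hb : 0 < b) (hc : 0 < c)
    (habc : a + b < c) (hs : ‖s‖ < 1) :
    HasDerivAt (₂F₁ a b c)
      (∑' k : ℕ, k * ordinaryHypergeometricCoefficient a b c k * s ^ (k - 1)) s := by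
  rw [ordinaryHypergeometric_eq_tsum_mul_pow]
  exact hasDerivAt_tsum_mul_pow (norm_ordinaryHypergeometricCoefficient_le_tsum ha hb hc habc) hs

lemma ordinaryHypergeometric_nonneg (ha : 0 < a) (hb : 0 < b) (hc : 0 < c) (hs : 0 ≤ s) :
    0 ≤ ₂F₁ a b c s := by
  rw [ordinaryHypergeometric_eq_tsum_mul_pow]
  exact tsum_nonneg fun k => mul_nonneg (ordinaryHypergeometricCoefficient_pos ha hb hc k).le
    (pow_nonneg hs k)

lemma ordinaryHypergeometric_le_tsum (ha : 0 < a) (hb : 0 < b) (hc : 0 < c) (habc : a + b < c)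
    (hs0 : 0 ≤ s) (hs1 : s ≤ 1) :
    ₂F₁ a b c s ≤ ∑' k, ordinaryHypergeometricCoefficient a b c k := by
  rw [ordinaryHypergeometric_eq_tsum_mul_pow]
  exact tsum_mul_pow_le_tsum (fun k => (ordinaryHypergeometricCoefficient_pos ha hb hc k).le)
    (summable_ordinaryHypergeometricCoefficient ha hb hc habc) hs0 hs1

lemma deriv_ordinaryHypergeometric_nonneg (ha : 0 < a) (hb : 0 < b) (hc : 0 < c)
    (habc : a + b < c) (hs0 : 0 ≤ s) (hs1 : s < 1) : 0 ≤ deriv (₂F₁ a b c) s := by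
  rw [(hasDerivAt_ordinaryHypergeometric ha hb hc habc
    (by rwa [Real.norm_of_nonneg hs0])).deriv]
  exact tsum_nonneg fun k => mul_nonneg (mul_nonneg k.cast_nonneg
    (ordinaryHypergeometricCoefficient_pos ha hb hc k).le) (pow_nonneg hs0 _)

lemma tendsto_deriv_ordinaryHypergeometric (ha : 0 < a) (hb : 0 < b) (hc : 0 < c)
    (habc : a + b < c) (hcab : c ≤ a + b + 1) :
    Tendsto (deriv (₂F₁ a b c)) (𝓝[<] (1 : ℝ)) atTop := by
  refine (tendsto_tsum_natCast_mul_mul_pow_sub_one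
    (fun k => (ordinaryHypergeometricCoefficient_pos ha hb hc k).le)
    (norm_ordinaryHypergeometricCoefficient_le_tsum ha hb hc habc)
    (not_summable_natCast_mul_ordinaryHypergeometricCoefficient ha hb hc hcab)).congr' ?_
  filter_upwards [Ioo_mem_nhdsLT zero_lt_one] with s hs
  exact (hasDerivAt_ordinaryHypergeometric ha hb hc habc
    (by rw [Real.norm_of_nonneg hs.1.le]; exact hs.2)).deriv.symm

end HypergeometricFunction

section HypergeometricMap

def radialHypergeometric (a b c : ℝ) (n : ℕ) : ℂ → ℂ :=
  fun z => ((₂F₁ a b c (‖z‖ ^ 2) : ℝ) : ℂ) * z ^ n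

variable {a b c : ℝ}

lemma tendsto_norm_sq_comap_nhdsLT_one :
    Tendsto (fun z : ℂ => ‖z‖ ^ 2) (comap (fun z : ℂ => ‖z‖) (𝓝[<] 1)) (𝓝[<] 1) := by
  have hnorm : Tendsto (fun z : ℂ => ‖z‖) (comap (fun z : ℂ => ‖z‖) (𝓝[<] 1)) (𝓝 1) :=
    tendsto_comap.mono_right nhdsWithin_le_nhds
  refine tendsto_nhdsWithin_iff.mpr ⟨by simpa using hnorm.pow 2, ?_⟩
  filter_upwards [tendsto_comap.eventually eventually_mem_nhdsWithin] with z hz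
  exact pow_lt_one₀ (norm_nonneg z) hz two_ne_zero

lemma tendsto_norm_pderivZbar_radialHypergeometric (ha : 0 < a) (hb : 0 < b)
    (hc : 0 < c) (habc : a + b < c) (hcab : c ≤ a + b + 1) (n : ℕ) :
    Tendsto (fun z => ‖pderivZbar (radialHypergeometric a b c n) z‖)
      (comap (fun z : ℂ => ‖z‖) (𝓝[<] 1)) atTop := by
  have hnorm : Tendsto (fun z : ℂ => ‖z‖) (comap (fun z : ℂ => ‖z‖) (𝓝[<] 1)) (𝓝 1) :=
    tendsto_comap.mono_right nhdsWithin_le_nhds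
  have hpow := hnorm.pow (n + 1)
  rw [one_pow] at hpow
  refine (((tendsto_deriv_ordinaryHypergeometric ha hb hc habc hcab).comp
    tendsto_norm_sq_comap_nhdsLT_one).atTop_mul_pos one_pos hpow).congr' ?_
  filter_upwards [tendsto_norm_sq_comap_nhdsLT_one.eventually eventually_mem_nhdsWithin] with z hz
  have hz0 : 0 ≤ ‖z‖ ^ 2 := by positivity
  have hz1 : ‖‖z‖ ^ 2‖ < 1 := by rwa [Real.norm_of_nonneg hz0]
  exact (norm_pderivZbar_ofReal_comp_norm_sq_mul_pow
    (hasDerivAt_ordinaryHypergeometric ha hb hc habc hz1).differentiableAt.hasDerivAt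
    (deriv_ordinaryHypergeometric_nonneg ha hb hc habc hz0 hz) n).symm

lemma eventually_norm_pderivZ_radialHypergeometric_sub_le (ha : 0 < a) (hb : 0 < b)
    (hc : 0 < c) (habc : a + b < c) (n : ℕ) :
    ∀ᶠ z in comap (fun z : ℂ => ‖z‖) (𝓝[<] 1),
      ‖pderivZbar (radialHypergeometric a b c n) z‖ ≤
        ‖pderivZ (radialHypergeometric a b c n) z‖ ∧
      ‖pderivZ (radialHypergeometric a b c n) z‖ -
        ‖pderivZbar (radialHypergeometric a b c n) z‖ ≤
          n * ∑' k, ordinaryHypergeometricCoefficient a b c k := by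
  filter_upwards [tendsto_comap.eventually eventually_mem_nhdsWithin] with z hz
  have hz0 : 0 ≤ ‖z‖ ^ 2 := by positivity
  have hz2 : ‖z‖ ^ 2 < 1 := pow_lt_one₀ (norm_nonneg z) hz two_ne_zero
  have hz1 : ‖‖z‖ ^ 2‖ < 1 := by rwa [Real.norm_of_nonneg hz0]
  have hF0 := ordinaryHypergeometric_nonneg ha hb hc hz0
  have hF1 := ordinaryHypergeometric_le_tsum ha hb hc habc hz0 hz2.le
  have hpow : ‖z‖ ^ (n - 1) ≤ 1 := pow_le_one₀ (norm_nonneg z) hz.le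
  unfold radialHypergeometric
  rw [norm_pderivZ_ofReal_comp_norm_sq_mul_pow
    (hasDerivAt_ordinaryHypergeometric ha hb hc habc hz1).differentiableAt.hasDerivAt hF0
    (deriv_ordinaryHypergeometric_nonneg ha hb hc habc hz0 hz2), add_sub_cancel_left]
  refine ⟨le_add_of_nonneg_right (by positivity), ?_⟩
  rw [mul_assoc]
  gcongr
  exact (mul_le_of_le_one_right hF0 hpow).trans hF1

end HypergeometricMap

lemma tendsto_Dnorm_sq_sub_mul_jacobian {f : ℂ → ℂ} {l : Filter ℂ} (K C : ℝ)
    (hq : Tendsto (fun z => ‖pderivZbar f z‖) l atTop)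
    (hpq : ∀ᶠ z in l, ‖pderivZbar f z‖ ≤ ‖pderivZ f z‖ ∧ ‖pderivZ f z‖ - ‖pderivZbar f z‖ ≤ C) :
    Tendsto (fun z => Dnorm f z ^ 2 - K * jacobian f z) l atTop := by
  refine tendsto_atTop_mono' l ?_ hq
  filter_upwards [hpq, hq.eventually_ge_atTop 1, hq.eventually_ge_atTop (|K| * C)]
    with z ⟨hqp, hdiff⟩ hq1 hqK
  set p := ‖pderivZ f z‖
  set q := ‖pderivZbar f z‖
  have hKd : K * (p - q) ≤ |K| * C :=
    (mul_le_mul_of_nonneg_right (le_abs_self K) (by linarith)).trans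
      (mul_le_mul_of_nonneg_left hdiff (abs_nonneg K))
  calc q = q * 1 := (mul_one q).symm
    _ ≤ (p + q) * (p + q - K * (p - q)) :=
        mul_le_mul (by linarith) (by linarith) zero_le_one (by linarith)
    _ = Dnorm f z ^ 2 - K * jacobian f z := by simp only [Dnorm, jacobian, p, q]; ring

lemma exists_isOpen_subset_unitDisk_of_eventually {P : ℂ → Prop}
    (h : ∀ᶠ z in comap (fun z : ℂ => ‖z‖) (𝓝[<] 1), P z) :
    ∃ U, IsOpen U ∧ U.Nonempty ∧ U ⊆ unitDisk ∧ ∀ z ∈ U, P z := by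
  obtain ⟨l, hl, hsub⟩ := mem_nhdsLT_iff_exists_Ioo_subset.mp (eventually_comap.mp h)
  obtain ⟨t, hlt, ht1⟩ := exists_between (max_lt (mem_Iio.mp hl) zero_lt_one)
  refine ⟨(fun z : ℂ => ‖z‖) ⁻¹' Ioo l 1, isOpen_Ioo.preimage continuous_norm, ⟨t, ?_⟩,
    fun z hz => mem_ball_zero_iff.mpr hz.2, fun z hz => hsub hz z rfl⟩
  rw [mem_preimage, norm_real, Real.norm_of_nonneg ((le_max_right l 0).trans hlt.le)]
  exact ⟨(le_max_left l 0).trans_lt hlt, ht1⟩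

lemma IsOpen.exists_of_ae_restrict_of_subset {X : Type*} [TopologicalSpace X] [MeasurableSpace X]
    [OpensMeasurableSpace X] {μ : Measure X} [μ.IsOpenPosMeasure] {U s : Set X} {P : X → Prop}
    (hU : IsOpen U) (hne : U.Nonempty) (hUs : U ⊆ s) (h : ∀ᵐ x ∂μ.restrict s, P x) :
    ∃ x ∈ U, P x := by
  have : (ae (μ.restrict U)).NeBot :=
    ae_neBot.mpr (Measure.restrict_eq_zero.not.mpr (hU.measure_pos μ hne).ne')
  exact ((ae_restrict_mem hU.measurableSet).and (ae_restrict_of_ae_restrict_of_subset hUs h)).exists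

lemma coefA_eq_ordinaryHypergeometricCoefficient (α : ℝ) (n : ℕ) :
    coefA α n = ordinaryHypergeometricCoefficient (-α / 2) (n - α / 2) (n + 1) := by
  ext k
  simp only [coefA, poch, ordinaryHypergeometricCoefficient]
  ring

lemma exF_eq (α : ℝ) (n : ℕ) :
    exF α n = radialHypergeometric (-α / 2) (n - α / 2) (n + 1) n := by
  ext z
  unfold radialHypergeometric
  rw [exF, tsum_mul_right, ordinaryHypergeometric_eq_tsum_mul_pow, ofReal_tsum,
    coefA_eq_ordinaryHypergeometricCoefficient]
  simp only [pow_mul]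

theorem stmt17_general (α : ℝ) (hα1 : -1 < α) (hα2 : α < 0) (n : ℕ) :
    (∀ K : ℝ, 1 ≤ K →
      Filter.Tendsto (fun z : ℂ => Dnorm (exF α n) z ^ 2 - K * jacobian (exF α n) z)
        (Filter.comap (fun z : ℂ => ‖z‖) (nhdsWithin 1 (Set.Iio 1)))
        Filter.atTop) ∧
    (∀ K K' : ℝ, 1 ≤ K → 0 ≤ K' →
      ∃ z ∈ unitDisk, K * jacobian (exF α n) z + K' < Dnorm (exF α n) z ^ 2) ∧
    (∀ K K' : ℝ, 1 ≤ K → 0 ≤ K' → ¬ IsElliptic K K' (exF α n)) := by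
  have ha : 0 < -α / 2 := by linarith
  have hb : 0 < (n : ℝ) - α / 2 := by have := n.cast_nonneg (α := ℝ); linarith
  have hc : 0 < (n : ℝ) + 1 := by positivity
  have habc : -α / 2 + (n - α / 2) < n + 1 := by linarith
  have hcab : (n : ℝ) + 1 ≤ -α / 2 + (n - α / 2) + 1 := by linarith
  have hdist : ∀ K : ℝ, Tendsto (fun z : ℂ => Dnorm (exF α n) z ^ 2 - K * jacobian (exF α n) z)
      (comap (fun z : ℂ => ‖z‖) (𝓝[<] 1)) atTop := fun K => by
    rw [exF_eq]
    exact tendsto_Dnorm_sq_sub_mul_jacobian K _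
      (tendsto_norm_pderivZbar_radialHypergeometric ha hb hc habc hcab n)
      (eventually_norm_pderivZ_radialHypergeometric_sub_le ha hb hc habc n)
  have hviolated : ∀ K K' : ℝ, ∃ U, IsOpen U ∧ U.Nonempty ∧ U ⊆ unitDisk ∧
      ∀ z ∈ U, K * jacobian (exF α n) z + K' < Dnorm (exF α n) z ^ 2 := fun K K' =>
    exists_isOpen_subset_unitDisk_of_eventually <|
      ((hdist K).eventually_gt_atTop K').mono fun z hz => by linarith
  refine ⟨fun K _ => hdist K, fun K K' _ _ => ?_, fun K K' _ _ hK => ?_⟩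
  · obtain ⟨U, -, ⟨z, hz⟩, hU, hviol⟩ := hviolated K K'
    exact ⟨z, hU hz, hviol z hz⟩
  · obtain ⟨U, hUo, hUne, hU, hviol⟩ := hviolated K K'
    obtain ⟨z, hz, hle⟩ := hUo.exists_of_ae_restrict_of_subset hUne hU hK.2.2
    exact (hviol z hz).not_ge hle

/-- For `α ∈ (-1,0)`, `n ≥ 1`, and `f(z) = Σ_k a_{n,k}|z|^{2k} z^n`: for
every `K ≥ 1` the quantity `‖D_f(z)‖² - K J_f(z)` tends to `+∞` as `|z| → 1⁻`; in particular
for all `K ≥ 1`, `K' ≥ 0` there is `z ∈ D` with `‖D_f(z)‖² > K J_f(z) + K'`, so `f` is not a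
`(K,K')`-elliptic mapping for any `K ≥ 1`, `K' ≥ 0`. -/
theorem stmt17 (α : ℝ) (hα1 : -1 < α) (hα2 : α < 0) (n : ℕ) (hn : 0 < n) :
    (∀ K : ℝ, 1 ≤ K →
      Filter.Tendsto (fun z : ℂ => Dnorm (exF α n) z ^ 2 - K * jacobian (exF α n) z)
        (Filter.comap (fun z : ℂ => ‖z‖) (nhdsWithin 1 (Set.Iio 1)))
        Filter.atTop) ∧
    (∀ K K' : ℝ, 1 ≤ K → 0 ≤ K' →
      ∃ z ∈ unitDisk, K * jacobian (exF α n) z + K' < Dnorm (exF α n) z ^ 2) ∧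
    (∀ K K' : ℝ, 1 ≤ K → 0 ≤ K' → ¬ IsElliptic K K' (exF α n)) :=
  stmt17_general α hα1 hα2 n
end
end
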